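/- Let s be a continuous strictly proper accuracy scoring rule on 𝒞 all of whose scores are finite, and let α ∈ [-∞, M] satisfy α ≤ s(p)(ω) for all p ∈ 𝒫 and ω ∈ Ω. Define s_α by: s_α(c) = s(c) if c ∉ 𝒫 or c ∈ ℛ; and for p ∈ 𝒫 \ ℛ, s_α(p)(ω) = s(p)(ω) if p({ω}) > 0 and s_α(p)(ω) = α if p({ω}) = 0. Then s_α is strictly proper: for every p ∈ 𝒫 and c ∈ 𝒞 with c ≠ p, E_p s_α(c) < E_p s_α(p). -/
import Mathlib


open Filter Topology

variable {Ω : Type*}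

/-- A probability function: nonnegative, finitely additive, total mass one. -/
def IsProbability [Fintype Ω] (p : Set Ω → ℝ) : Prop :=
  (∀ A, 0 ≤ p A) ∧ (∀ A B : Set Ω, Disjoint A B → p (A ∪ B) = p A + p B) ∧ p Set.univ = 1

/-- Expected value `E_p f = Σ_{ω, p({ω}) ≠ 0} p({ω}) f(ω)`.  Since `EReal`
multiplication satisfies `0 * a = a * 0 = 0` even for infinite `a`, the zero terms
contribute nothing and we may sum over all of `Ω`. -/
noncomputable def expScore [Fintype Ω] (p : Set Ω → ℝ) (f : Ω → EReal) : EReal :=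
  ∑ ω, (p {ω} : EReal) * f ω

/-- A score is finite when all of its values are finite. -/
def FiniteScore (f : Ω → EReal) : Prop := ∀ ω, f ω ≠ ⊥ ∧ f ω ≠ ⊤

theorem stmt13 [Fintype Ω] [Nonempty Ω] (M : ℝ)
    (s : (Set Ω → ℝ) → Ω → EReal)
    (hbound : ∀ c ω, s c ω ≤ (M : EReal))
    (hfin : ∀ c, FiniteScore (s c))
    -- continuity w.r.t. pointwise convergence on `𝒞` and the product of the
    -- order topology on `[-∞,M]^Ω`
    (hcont : Continuous s)
    (hstrict : ∀ p c, IsProbability p → c ≠ p →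
      expScore p (s c) < expScore p (s p))
    (α : EReal) (hαM : α ≤ (M : EReal))
    (hα : ∀ p, IsProbability p → ∀ ω, α ≤ s p ω)
    (sα : (Set Ω → ℝ) → Ω → EReal)
    -- s_α(c) = s(c) if c ∉ 𝒫
    (hsα₁ : ∀ c, ¬ IsProbability c → sα c = s c)
    -- s_α(c) = s(c) if c ∈ ℛ
    (hsα₂ : ∀ p, IsProbability p → (∀ ω, 0 < p {ω}) → sα p = s p)
    -- for p ∈ 𝒫 \ ℛ: s_α(p)(ω) = s(p)(ω) if p({ω}) > 0, and = α if p({ω}) = 0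
    (hsα₃ : ∀ p, IsProbability p → ¬ (∀ ω, 0 < p {ω}) → ∀ ω,
      (0 < p {ω} → sα p ω = s p ω) ∧ (p {ω} = 0 → sα p ω = α)) :
    ∀ p c, IsProbability p → c ≠ p →
      expScore p (sα c) < expScore p (sα p) := by
  intro p c hp hne
  -- sα is pointwise ≤ s
  have hle : ∀ d ω, sα d ω ≤ s d ω := by
    intro d ω
    by_cases hd : IsProbability d
    · by_cases hreg : ∀ ω, 0 < d {ω}
      · rw [hsα₂ d hd hreg]
      · rcases (hsα₃ d hd hreg ω) with ⟨h1, h2⟩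
        rcases lt_or_eq_of_le (hd.1 {ω}) with hpos | hzero
        · rw [h1 hpos]
        · rw [h2 hzero.symm]; exact hα d hd ω
    · rw [hsα₁ d hd]
  -- expScore p (sα p) = expScore p (s p)
  have heq : expScore p (sα p) = expScore p (s p) := by
    unfold expScore
    refine Finset.sum_congr rfl fun ω _ => ?_
    by_cases hreg : ∀ ω, 0 < p {ω}
    · rw [hsα₂ p hp hreg]
    · rcases lt_or_eq_of_le (hp.1 {ω}) with hpos | hzero
      · rw [(hsα₃ p hp hreg ω).1 hpos]
      · rw [← hzero]; simp
  have hcle : expScore p (sα c) ≤ expScore p (s c) := by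
    unfold expScore
    refine Finset.sum_le_sum fun ω _ => ?_
    exact mul_le_mul_of_nonneg_left (hle c ω) (by exact_mod_cast hp.1 {ω})
  rw [heq]
  exact lt_of_le_of_lt hcle (hstrict p c hp hne)
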